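/- arXiv:1206.6963 — 6 statements merged into one kernel-verified Lean document; each statement's English description precedes it below -/
import Mathlib

section
/- If f : [1,∞) → ℝ is locally integrable and there exist constants C > 0 and x₀ ≥ 1 such that u·(log u)·f(u) ≥ −C for almost every u > x₀, then the function s(x) := ∫₁ˣ f(u) du is slowly decreasing with respect to logarithmic summability, i.e., lim_{λ→1⁺} liminf_{x→∞} inf_{x < t ≤ x^λ} (s(t) − s(x)) ≥ 0. -/
open Filter MeasureTheory Set intervalIntegral

/-- `s` is slowly decreasing with respect to logarithmic summability `(L,1)`:
`lim_{λ→1⁺} liminf_{x→∞} inf_{x < t ≤ x^λ} (s t - s x) ≥ 0`. -/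
def SlowlyDecreasingL1 (s : ℝ → ℝ) : Prop :=
  (0 : EReal) ≤ ⨆ l ∈ Set.Ioi (1 : ℝ),
    Filter.liminf (fun x : ℝ =>
      sInf ((fun t : ℝ => ((s t - s x : ℝ) : EReal)) '' Set.Ioc x (x ^ l))) Filter.atTop

/-! Since `u ↦ log (log u)` has derivative `1 / (u log u)`, the bound `u log u f(u) ≥ -C` gives
`s t - s x ≥ -C (log log t - log log x)`, and for `x < t ≤ x ^ λ` the right-hand side is at least
`-C log λ`, which tends to `0` as `λ → 1⁺`. -/

open Real Topology

theorem MeasureTheory.LocallyIntegrableOn.intervalIntegrable_of_uIcc_subset {E : Type*}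
    [NormedAddCommGroup E] {f : ℝ → E} {μ : Measure ℝ} {s : Set ℝ} {a b : ℝ} (hf : LocallyIntegrableOn f s μ)
    (hab : uIcc a b ⊆ s) : IntervalIntegrable f μ a b :=
  (hf.integrableOn_compact_subset hab isCompact_uIcc).intervalIntegrable

theorem slowlyDecreasingL1_of_eventually_le {s g : ℝ → ℝ} (hg : Tendsto g (𝓝[>] 1) (𝓝 0))
    (h : ∀ l > 1, ∀ᶠ x in atTop, ∀ t ∈ Ioc x (x ^ l), g l ≤ s t - s x) :
    SlowlyDecreasingL1 s := by
  have hg' : Tendsto (fun l => (g l : EReal)) (𝓝[>] 1) (𝓝 0) :=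
    (continuous_coe_real_ereal.tendsto 0).comp hg
  refine le_of_tendsto hg' (eventually_nhdsWithin_of_forall fun l hl => ?_)
  refine le_iSup₂_of_le l hl (le_liminf_of_le (by isBoundedDefault) ?_)
  filter_upwards [h l hl] with x hx
  exact le_sInf <| forall_mem_image.2 fun t ht => EReal.coe_le_coe (hx t ht)

theorem neg_mul_log_log_sub_le_integral {f : ℝ → ℝ} {C x t : ℝ} (hx : 1 < x) (hxt : x ≤ t)
    (hf : IntervalIntegrable f volume x t)
    (hbound : ∀ᵐ u, u ∈ Icc x t → -C ≤ u * log u * f u) :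
    -C * (log (log t) - log (log x)) ≤ ∫ u in x..t, f u := by
  have hint : IntervalIntegrable (fun u => u⁻¹ / log u) volume x t := by
    refine ContinuousOn.intervalIntegrable ?_
    fun_prop (disch := grind [log_pos, uIcc])
  rw [← integral_inv_div_log hx (hx.trans_le hxt), ← intervalIntegral.integral_const_mul]
  refine integral_mono_ae_restrict hxt (hint.const_mul _) hf ?_
  refine (ae_restrict_iff' measurableSet_Icc).2 ?_
  filter_upwards [hbound] with u hu hu_mem
  have hlog : 0 < log u := log_pos (hx.trans_le hu_mem.1)
  have hu0 : 0 < u := by linarith [hu_mem.1]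
  calc -C * (u⁻¹ / log u) = -C / (u * log u) := by field_simp
    _ ≤ f u := by
      rw [div_le_iff₀ (by positivity)]
      linarith [hu hu_mem]

theorem log_log_le_of_le_rpow {x t l : ℝ} (hx : 1 < x) (hxt : x ≤ t) (hl : 0 < l)
    (htl : t ≤ x ^ l) : log (log t) ≤ log l + log (log x) := by
  have hlogx : 0 < log x := log_pos hx
  calc log (log t) ≤ log (l * log x) := by
        refine log_le_log (log_pos (hx.trans_le hxt)) ?_
        rw [← log_rpow (by linarith)]
        exact log_le_log (by linarith) htl
    _ = log l + log (log x) := log_mul hl.ne' hlogx.ne'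

theorem stmt2_general (f : ℝ → ℝ) (C x₀ : ℝ) (hC : 0 < C)
    (hf : LocallyIntegrableOn f (Ici (1 : ℝ)))
    (hbound : ∀ᵐ u : ℝ, x₀ < u → -C ≤ u * Real.log u * f u) :
    SlowlyDecreasingL1 (fun x => ∫ u in (1 : ℝ)..x, f u) := by
  have hint : ∀ {a b : ℝ}, 1 ≤ a → 1 ≤ b → IntervalIntegrable f volume a b := fun ha hb =>
    hf.intervalIntegrable_of_uIcc_subset fun _ hu => (le_inf ha hb).trans hu.1
  have hg : Tendsto (fun l => -C * log l) (𝓝[>] 1) (𝓝 0) := by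
    simpa using ((continuousAt_log one_ne_zero).tendsto.const_mul (-C)).mono_left
      nhdsWithin_le_nhds
  refine slowlyDecreasingL1_of_eventually_le hg fun l hl => ?_
  filter_upwards [eventually_gt_atTop (max x₀ 1)] with x hx t ⟨hxt, htl⟩
  obtain ⟨hx₀x, h1x⟩ := max_lt_iff.1 hx
  rw [integral_interval_sub_left (hint le_rfl (by linarith)) (hint le_rfl h1x.le)]
  have hlog := log_log_le_of_le_rpow h1x hxt.le (by linarith) htl
  calc -C * log l ≤ -C * (log (log t) - log (log x)) := by nlinarith
    _ ≤ _ := neg_mul_log_log_sub_le_integral h1x hxt.le (hint h1x.le (by linarith))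
        (hbound.mono fun u hu hu_mem => hu (hx₀x.trans_le hu_mem.1))

theorem stmt2 (f : ℝ → ℝ) (C x₀ : ℝ) (hC : 0 < C) (hx₀ : 1 ≤ x₀)
    (hf : LocallyIntegrableOn f (Ici (1 : ℝ)))
    (hbound : ∀ᵐ u : ℝ, x₀ < u → -C ≤ u * Real.log u * f u) :
    SlowlyDecreasingL1 (fun x => ∫ u in (1 : ℝ)..x, f u) :=
  stmt2_general f C x₀ hC hf hbound
end

section
/- Let s : [1,∞) → ℂ be locally integrable with x₀ > e and λ > 1 such that |s(t) − s(x)| ≤ 1 whenever x₀ ≤ x < t ≤ x^λ. Then there exists a constant B₂ > 0 such that (1/log t)·∫_{x₀}^{t} |s(t) − s(x)|/x dx ≤ B₂ for all t > x₀^λ. -/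
/-!
Chaining the hypothesis `k` times gives `‖s t - s x‖ ≤ k` whenever `x ≤ t ≤ x ^ λ ^ k`; taking
`k = ⌈log (log t / log x) / log λ⌉` yields `‖s t - s x‖ ≤ 1 + log (log t / log x) / log λ`. After the substitution
`u = log x` the integral of this bound against `dx / x` is at most `(1 + 1 / log λ) log t`, since
`∫_a^T log (T / u) du ≤ T`.
-/

open MeasureTheory Set intervalIntegral Real

section Chaining

variable {E : Type*} [SeminormedAddCommGroup E] {s : ℝ → E} {x₀ lam : ℝ}

lemma norm_sub_le_of_le_rpow_pow (hx₀ : 1 < x₀) (hlam : 1 < lam)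
    (h : ∀ x t : ℝ, x₀ ≤ x → x < t → t ≤ x ^ lam → ‖s t - s x‖ ≤ 1) (n : ℕ) :
    ∀ {x t : ℝ}, x₀ ≤ x → x ≤ t → t ≤ x ^ lam ^ n → ‖s t - s x‖ ≤ n := by
  induction n with
  | zero =>
    intro x t _ hxt htx
    rw [pow_zero, rpow_one] at htx
    simp [le_antisymm htx hxt]
  | succ n ih =>
    intro x t hx hxt ht
    rcases hxt.eq_or_lt with rfl | hxt
    · simp only [sub_self, norm_zero]; positivity
    by_cases hstep : t ≤ x ^ lam
    · exact (h x t hx hxt hstep).trans (by simp)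
    · have hx1 : 1 < x := hx₀.trans_le hx
      have hxy : x < x ^ lam := self_lt_rpow_of_one_lt hx1 hlam
      have hyt : t ≤ (x ^ lam) ^ lam ^ n := by
        rwa [← rpow_mul (by positivity), ← pow_succ']
      calc ‖s t - s x‖ ≤ ‖s t - s (x ^ lam)‖ + ‖s (x ^ lam) - s x‖ :=
            norm_sub_le_norm_sub_add_norm_sub _ _ _
        _ ≤ n + 1 := add_le_add (ih (hx.trans hxy.le) (not_le.mp hstep).le hyt)
            (h x _ hx hxy le_rfl)
        _ = ↑(n + 1) := by push_cast; rfl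

lemma norm_sub_le_one_add_log_log_sub (hx₀ : 1 < x₀) (hlam : 1 < lam)
    (h : ∀ x t : ℝ, x₀ ≤ x → x < t → t ≤ x ^ lam → ‖s t - s x‖ ≤ 1) {x t : ℝ}
    (hx : x₀ ≤ x) (hxt : x ≤ t) :
    ‖s t - s x‖ ≤ 1 + (log (log t) - log (log x)) / log lam := by
  set r := (log (log t) - log (log x)) / log lam
  have hL : 0 < log lam := log_pos hlam
  have hlogx : 0 < log x := log_pos (hx₀.trans_le hx)
  have hlogxt : log x ≤ log t := log_le_log (by linarith) hxt
  have hr : 0 ≤ r := div_nonneg (sub_nonneg.mpr (log_le_log hlogx hlogxt)) hL.le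
  have hreach : t ≤ x ^ lam ^ ⌈r⌉₊ := by
    have hloglog : log (log t) ≤ log (lam ^ ⌈r⌉₊ * log x) := by
      rw [log_mul (by positivity) hlogx.ne', log_pow]
      have := mul_le_mul_of_nonneg_right (Nat.le_ceil r) hL.le
      rw [div_mul_cancel₀ _ hL.ne'] at this
      linarith
    have hxpos : 0 < x := by linarith [hx₀.trans_le hx]
    rw [← log_le_log_iff (by linarith) (rpow_pos_of_pos hxpos _), log_rpow hxpos]
    exact (log_le_log_iff (hlogx.trans_le hlogxt) (by positivity)).mp hloglog
  calc ‖s t - s x‖ ≤ ⌈r⌉₊ := norm_sub_le_of_le_rpow_pow hx₀ hlam h _ hx hxt hreach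
    _ ≤ 1 + r := by linarith [Nat.ceil_lt_add_one hr]

end Chaining

lemma continuousOn_one_add_log_log_sub_div {a : ℝ} (ha : 1 < a) (c L : ℝ) :
    ContinuousOn (fun x => (1 + (c - log (log x)) / L) / x) (Ici a) := by
  have hpos : ∀ x ∈ Ici a, 0 < x := fun x hx => by linarith [mem_Ici.mp hx]
  have hlog : ∀ x ∈ Ici a, 0 < log x := fun x hx => log_pos (ha.trans_le hx)
  have hcont_log : ContinuousOn log (Ici a) :=
    continuousOn_log.mono fun x hx => (hpos x hx).ne'
  exact (continuousOn_const.add ((continuousOn_const.sub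
    (hcont_log.log fun x hx => (hlog x hx).ne')).div_const L)).div continuousOn_id
    fun x hx => (hpos x hx).ne'

lemma integral_one_add_log_log_sub_div_le {a b L : ℝ} (ha : 1 < a) (hab : a ≤ b) (hL : 0 < L) :
    ∫ x in a..b, (1 + (log (log b) - log (log x)) / L) / x ≤ log b * (1 + L⁻¹) := by
  set G : ℝ → ℝ := fun x => log x * (1 + (log (log b) - log (log x) + 1) / L)
  have hderiv : ∀ x ∈ uIcc a b,
      HasDerivAt G ((1 + (log (log b) - log (log x)) / L) / x) x := by
    intro x hx
    rw [uIcc_of_le hab] at hx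
    have hxpos : 0 < x := by linarith [hx.1]
    have hlogx : 0 < log x := log_pos (ha.trans_le hx.1)
    have hlog : HasDerivAt log x⁻¹ x := hasDerivAt_log hxpos.ne'
    have hloglog := (hasDerivAt_log hlogx.ne').comp x hlog
    refine (hlog.mul ((((hasDerivAt_const x (log (log b))).sub hloglog).add_const 1).div_const
      L |>.const_add 1)).congr_deriv ?_
    simp only [Pi.sub_apply, Function.comp_apply]
    field_simp
    ring
  have hint : IntervalIntegrable (fun x => (1 + (log (log b) - log (log x)) / L) / x) volume a b :=
    ((continuousOn_one_add_log_log_sub_div ha _ L).mono Icc_subset_Ici_self)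
      |>.intervalIntegrable_of_Icc hab
  rw [integral_eq_sub_of_hasDerivAt hderiv hint]
  have hloga : 0 < log a := log_pos ha
  have hll : log (log a) ≤ log (log b) := log_le_log hloga (log_le_log (by linarith) hab)
  have hGa : 0 ≤ G a := by
    have := div_nonneg (by linarith : 0 ≤ log (log b) - log (log a) + 1) hL.le
    exact mul_nonneg hloga.le (by linarith)
  have hGb : G b = log b * (1 + L⁻¹) := by simp only [G, sub_self, zero_add, one_div]
  linarith

theorem stmt9_general (s : ℝ → ℂ) (x₀ lam : ℝ) (hx₀ : Real.exp 1 < x₀) (hlam : 1 < lam)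
    (h : ∀ x t : ℝ, x₀ ≤ x → x < t → t ≤ x ^ lam → ‖s t - s x‖ ≤ 1) :
    ∃ B₂ : ℝ, 0 < B₂ ∧
      ∀ t : ℝ, x₀ ^ lam < t →
        (Real.log t)⁻¹ * ∫ x in x₀..t, ‖s t - s x‖ / x ≤ B₂ := by
  have hx₀' : 1 < x₀ := one_lt_exp_iff.mpr one_pos |>.trans hx₀
  have hL : 0 < log lam := log_pos hlam
  refine ⟨1 + (log lam)⁻¹, by positivity, fun t ht => ?_⟩
  have hx₀t : x₀ ≤ t := (self_lt_rpow_of_one_lt hx₀' hlam).trans ht |>.le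
  have hbound : ∀ x ∈ Ioc x₀ t, ‖s t - s x‖ / x ≤ (1 + (log (log t) - log (log x)) / log lam) / x :=
    fun x hx => div_le_div_of_nonneg_right
      (norm_sub_le_one_add_log_log_sub hx₀' hlam h hx.1.le hx.2) (by linarith [hx.1])
  have hint : IntegrableOn (fun x => (1 + (log (log t) - log (log x)) / log lam) / x) (Ioc x₀ t) :=
    ((continuousOn_one_add_log_log_sub_div hx₀' _ _).mono Icc_subset_Ici_self).integrableOn_Icc
      |>.mono_set Ioc_subset_Icc_self
  rw [inv_mul_le_iff₀ (log_pos (hx₀'.trans_le hx₀t)), integral_of_le hx₀t]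
  calc ∫ x in Ioc x₀ t, ‖s t - s x‖ / x
      ≤ ∫ x in Ioc x₀ t, (1 + (log (log t) - log (log x)) / log lam) / x :=
        setIntegral_mono_of_nonneg (fun x hx => div_nonneg (norm_nonneg _) (by linarith [hx.1]))
          hbound hint
    _ ≤ log t * (1 + (log lam)⁻¹) := by
        rw [← integral_of_le hx₀t]
        exact integral_one_add_log_log_sub_div_le hx₀' hx₀t hL

theorem stmt9 (s : ℝ → ℂ) (x₀ lam : ℝ) (hx₀ : Real.exp 1 < x₀) (hlam : 1 < lam)
    (hs : LocallyIntegrableOn s (Ici (1 : ℝ)))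
    (h : ∀ x t : ℝ, x₀ ≤ x → x < t → t ≤ x ^ lam → ‖s t - s x‖ ≤ 1) :
    ∃ B₂ : ℝ, 0 < B₂ ∧
      ∀ t : ℝ, x₀ ^ lam < t →
        (Real.log t)⁻¹ * ∫ x in x₀..t, ‖s t - s x‖ / x ≤ B₂ :=
  stmt9_general s x₀ lam hx₀ hlam h
end

section
/- If a measurable function s : [1,∞) → ℝ is slowly decreasing with respect to logarithmic summability and the statistical limit st-lim_{x→∞} s(x) = ℓ exists, then the ordinary limit lim_{x→∞} s(x) = ℓ exists. -/
open Filter MeasureTheory Set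

/-- Statistical limit of a real-valued measurable function at `∞`. -/
def StatLimR (s : ℝ → ℝ) (ℓ : ℝ) : Prop :=
  ∀ ε : ℝ, 0 < ε →
    Tendsto (fun b : ℝ =>
        (volume {x : ℝ | x ∈ Ioo (1 : ℝ) b ∧ ε < |s x - ℓ|}).toReal / (b - 1))
      atTop (nhds 0)

/-!
Fix `δ > 0`. Slow decrease gives `l > 1` with `s x - δ < s t` whenever `x` is large and
`x < t ≤ x ^ l`. Statistical convergence makes the set where `|s - ℓ| > δ` have density below
`1/2` in `(1, b)` for large `b`, so it cannot contain an interval `(a, b)` with `2a ≤ b`: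
such an interval always holds a point `y` with `|s y - ℓ| ≤ δ`. Using `(x, x ^ l)` gives
`s x < s y + δ ≤ ℓ + 2δ`; using `(x ^ (1/l), x)`, where `x ≤ y ^ l`, gives
`ℓ - 2δ ≤ s y - δ < s x`.
-/

lemma SlowlyDecreasingL1.exists_eventually_sub_lt {s : ℝ → ℝ} (hsd : SlowlyDecreasingL1 s)
    {δ : ℝ} (hδ : 0 < δ) :
    ∃ l : ℝ, 1 < l ∧ ∀ᶠ x in atTop, ∀ t ∈ Ioc x (x ^ l), s x - δ < s t := by
  have hneg : ((-δ : ℝ) : EReal) < 0 := by exact_mod_cast neg_neg_of_pos hδ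
  obtain ⟨l, hl⟩ := lt_iSup_iff.mp (hneg.trans_le hsd)
  obtain ⟨hl1, hlim⟩ := lt_iSup_iff.mp hl
  refine ⟨l, hl1, ?_⟩
  filter_upwards [eventually_lt_of_lt_liminf hlim] with x hx t ht
  have : ((-δ : ℝ) : EReal) < ((s t - s x : ℝ) : EReal) :=
    hx.trans_le (sInf_le (mem_image_of_mem _ ht))
  linarith [EReal.coe_lt_coe_iff.mp this]

lemma sub_le_toReal_volume_of_Ioo_subset {S : Set ℝ} {a b c : ℝ} (hS : S ⊆ Ioo c b)
    (hab : Ioo a b ⊆ S) : b - a ≤ (volume S).toReal := by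
  have hfin : volume S ≠ ⊤ := ((measure_mono hS).trans_lt measure_Ioo_lt_top).ne
  calc b - a ≤ (volume (Ioo a b)).toReal := by
        rw [Real.volume_Ioo, ENNReal.toReal_ofReal']; exact le_max_left _ _
    _ ≤ (volume S).toReal := ENNReal.toReal_mono hfin (measure_mono hab)

lemma StatLimR.eventually_exists_near {s : ℝ → ℝ} {ℓ : ℝ} (hst : StatLimR s ℓ)
    {δ : ℝ} (hδ : 0 < δ) :
    ∀ᶠ b in atTop, ∀ a, 1 ≤ a → 2 * a ≤ b → ∃ y ∈ Ioo a b, |s y - ℓ| ≤ δ := by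
  filter_upwards [(hst δ hδ).eventually_lt_const one_half_pos, eventually_gt_atTop 1]
    with b hb hb1 a ha hab
  by_contra! hfar
  have hvol := sub_le_toReal_volume_of_Ioo_subset (S := {x | x ∈ Ioo 1 b ∧ δ < |s x - ℓ|})
    (fun x hx => hx.1) (fun y hy => ⟨⟨ha.trans_lt hy.1, hy.2⟩, hfar y hy⟩)
  rw [div_lt_iff₀ (by linarith)] at hb
  linarith

lemma eventually_mul_le_rpow (c : ℝ) {l : ℝ} (hl : 1 < l) :
    ∀ᶠ x : ℝ in atTop, c * x ≤ x ^ l := by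
  filter_upwards [(tendsto_rpow_atTop (sub_pos.mpr hl)).eventually_ge_atTop c,
    eventually_gt_atTop 0] with x hc hx
  calc c * x ≤ x ^ (l - 1) * x ^ (1 : ℝ) := by rw [Real.rpow_one]; gcongr
    _ = x ^ l := by rw [← Real.rpow_add hx, sub_add_cancel]

section Tauberian

variable {s : ℝ → ℝ} {ℓ δ l : ℝ}

lemma eventually_lt_add_two_mul (hl : 1 < l)
    (hslow : ∀ᶠ x in atTop, ∀ t ∈ Ioc x (x ^ l), s x - δ < s t)
    (hnear : ∀ᶠ b in atTop, ∀ a, 1 ≤ a → 2 * a ≤ b → ∃ y ∈ Ioo a b, |s y - ℓ| ≤ δ) :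
    ∀ᶠ x in atTop, s x < ℓ + 2 * δ := by
  filter_upwards [hslow, (tendsto_rpow_atTop (by linarith)).eventually hnear,
    eventually_mul_le_rpow 2 hl, eventually_ge_atTop 1] with x hx hxl h2x hx1
  obtain ⟨y, hy, hyℓ⟩ := hxl x hx1 h2x
  linarith [hx y ⟨hy.1, hy.2.le⟩, (abs_le.mp hyℓ).2]

lemma eventually_sub_two_mul_lt (hl : 1 < l)
    (hslow : ∀ᶠ x in atTop, ∀ t ∈ Ioc x (x ^ l), s x - δ < s t)
    (hnear : ∀ᶠ b in atTop, ∀ a, 1 ≤ a → 2 * a ≤ b → ∃ y ∈ Ioo a b, |s y - ℓ| ≤ δ) :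
    ∀ᶠ x in atTop, ℓ - 2 * δ < s x := by
  have hroot : Tendsto (fun x : ℝ => x ^ l⁻¹) atTop atTop :=
    tendsto_rpow_atTop (inv_pos.mpr (by linarith))
  filter_upwards [hroot.eventually (eventually_forall_ge_atTop.mpr hslow),
    hroot.eventually (eventually_mul_le_rpow 2 hl), hroot.eventually (eventually_ge_atTop 1),
    hnear, eventually_ge_atTop 0] with x hslow' h2x hx1 hxb hx0
  rw [Real.rpow_inv_rpow hx0 (by linarith)] at h2x
  obtain ⟨y, hy, hyℓ⟩ := hxb _ hx1 h2x
  have hxy : x ≤ y ^ l := by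
    calc x = (x ^ l⁻¹) ^ l := (Real.rpow_inv_rpow hx0 (by linarith)).symm
      _ ≤ y ^ l := by gcongr; exact hy.1.le
  linarith [hslow' y hy.1.le x ⟨hy.2, hxy⟩, (abs_le.mp hyℓ).1]

end Tauberian

theorem stmt10_general (s : ℝ → ℝ) (ℓ : ℝ)
    (hsd : SlowlyDecreasingL1 s) (hst : StatLimR s ℓ) :
    Tendsto s atTop (nhds ℓ) := by
  rw [Metric.tendsto_nhds]
  intro ε hε
  obtain ⟨l, hl, hslow⟩ := hsd.exists_eventually_sub_lt (half_pos hε)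
  have hnear := hst.eventually_exists_near (half_pos hε)
  filter_upwards [eventually_lt_add_two_mul hl hslow hnear,
    eventually_sub_two_mul_lt hl hslow hnear] with x hup hlow
  rw [Real.dist_eq, abs_lt]
  constructor <;> linarith

theorem stmt10 (s : ℝ → ℝ) (ℓ : ℝ) (hs : Measurable s)
    (hsd : SlowlyDecreasingL1 s) (hst : StatLimR s ℓ) :
    Tendsto s atTop (nhds ℓ) :=
  stmt10_general s ℓ hsd hst
end

section
/- If s : [1,∞) → ℝ is locally integrable and slowly decreasing with respect to logarithmic summability, then its logarithmic mean τ(t) := (1/log t)·∫₁ᵗ s(x)/x dx is also slowly decreasing with respect to logarithmic summability. -/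
/-!
Substituting `x = exp y` turns `τ` into the Cesàro mean `M y = y⁻¹ ∫₀^y σ` of `σ = s ∘ exp`, and
slow decrease with respect to `(L,1)` into ordinary slow decrease: `σ u - σ v ≥ -ε` whenever
`v < u ≤ l v`, `v` large.

For `x < t` one has `M t - M x = (1 - x/t) (⨍_{[x,t]} σ - M x)`. If `t ≤ μ x`, slow decrease
of `σ` over ratio `μ²` gives `⨍_{[x,t]} σ ≥ ⨍_{[x/μ,x]} σ - ε`, and
`⨍_{[x/μ,x]} σ - M x = (M x - M (x/μ)) / (μ - 1)`. So a lower bound `-K` for the drops of `M` over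
ratio `μ` reproduces itself one scale up, and induction along the scales `μⁿ X` gives such a `K`.
Letting `t/x` be close to `1` then makes `(1 - x/t) K` small.
-/

open Filter MeasureTheory Set intervalIntegral

open Real

def BoundedDrop (f : ℝ → ℝ) (l e : ℝ) : Prop :=
  ∀ᶠ x in atTop, ∀ t ∈ Ioc x (l * x), f x - e ≤ f t

def SlowlyDecreasing (f : ℝ → ℝ) : Prop :=
  ∀ ε > 0, ∃ l > 1, BoundedDrop f l ε

theorem BoundedDrop.mono_ratio {f : ℝ → ℝ} {l l' e : ℝ} (h : BoundedDrop f l e) (hl : l' ≤ l) :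
    BoundedDrop f l' e := by
  filter_upwards [h, eventually_ge_atTop 0] with x hx hx0 t ht
  exact hx t ⟨ht.1, ht.2.trans (mul_le_mul_of_nonneg_right hl hx0)⟩

theorem SlowlyDecreasing.congr {f g : ℝ → ℝ} (h : SlowlyDecreasing f) (hfg : f =ᶠ[atTop] g) :
    SlowlyDecreasing g := by
  intro ε hε
  obtain ⟨l, hl, hfl⟩ := h ε hε
  refine ⟨l, hl, ?_⟩
  filter_upwards [hfl, eventually_forall_ge_atTop.2 hfg] with x hx hxg t ht
  rw [← hxg x le_rfl, ← hxg t ht.1.le]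
  exact hx t ht

theorem slowlyDecreasingL1_iff {s : ℝ → ℝ} : SlowlyDecreasingL1 s ↔
    ∀ ε > 0, ∃ l > (1 : ℝ), ∀ᶠ x in atTop, ∀ t ∈ Ioc x (x ^ l), s x - ε ≤ s t := by
  constructor
  · intro h ε hε
    obtain ⟨l, hl⟩ := lt_iSup_iff.1 <| (EReal.coe_lt_coe_iff.2 (neg_neg_of_pos hε)).trans_le h
    obtain ⟨hl1, hl⟩ := lt_iSup_iff.1 hl
    refine ⟨l, hl1, ?_⟩
    filter_upwards [eventually_lt_of_lt_liminf hl] with x hx t ht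
    have := EReal.coe_lt_coe_iff.1 (hx.trans_le (sInf_le ⟨t, ht, rfl⟩))
    linarith
  · intro h
    refine EReal.ge_of_forall_gt_iff_ge.1 fun z hz => ?_
    obtain ⟨l, hl1, hl⟩ := h (-z) (by simpa using EReal.coe_lt_coe_iff.1 hz)
    refine le_trans ?_ (le_iSup₂_of_le l hl1 le_rfl)
    refine le_liminf_of_le (by isBoundedDefault) ?_
    filter_upwards [hl] with x hx
    refine le_sInf ?_
    rintro _ ⟨t, ht, rfl⟩
    exact EReal.coe_le_coe_iff.2 (by linarith [hx t ht])

theorem slowlyDecreasingL1_iff_comp_exp {s : ℝ → ℝ} :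
    SlowlyDecreasingL1 s ↔ SlowlyDecreasing (s ∘ exp) := by
  rw [slowlyDecreasingL1_iff]
  refine forall₂_congr fun ε _ => exists_congr fun l => and_congr_right fun hl =>
    ⟨fun h => ?_, fun h => ?_⟩
  · filter_upwards [tendsto_exp_atTop.eventually h] with y hy u hu
    refine hy (exp u) ⟨exp_lt_exp.2 hu.1, ?_⟩
    rw [← exp_mul, mul_comm]
    exact exp_le_exp.2 hu.2
  · filter_upwards [tendsto_log_atTop.eventually h, eventually_gt_atTop 0] with x hy hx t ht
    have ht0 : 0 < t := hx.trans ht.1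
    have hlog : log t ∈ Ioc (log x) (l * log x) := by
      refine ⟨log_lt_log hx ht.1, ?_⟩
      rw [← log_rpow hx]
      exact log_le_log ht0 ht.2
    simpa [exp_log hx, exp_log ht0] using hy (log t) hlog

theorem integral_div_self_eq_integral_comp_exp (s : ℝ → ℝ) {y : ℝ} (hy : 0 ≤ y) :
    ∫ x in (1 : ℝ)..exp y, s x / x = ∫ u in (0 : ℝ)..y, s (exp u) := by
  rw [integral_of_le (one_le_exp hy), integral_of_le hy, ← exp_zero, ← image_exp_Ioc,
    integral_image_eq_integral_abs_deriv_smul measurableSet_Ioc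
      (fun u _ => (hasDerivAt_exp u).hasDerivWithinAt) exp_injective.injOn]
  refine setIntegral_congr_fun measurableSet_Ioc fun u _ => ?_
  simp [abs_of_pos (exp_pos u), mul_div_cancel₀ _ (exp_pos u).ne']

theorem MeasureTheory.LocallyIntegrableOn.comp_exp {s : ℝ → ℝ}
    (hs : LocallyIntegrableOn s (Ici 1)) :
    LocallyIntegrableOn (s ∘ exp) (Ici 0) := by
  rw [locallyIntegrableOn_iff isClosed_Ici.isLocallyClosed] at hs ⊢
  intro k hk hkc
  have hek : exp '' k ⊆ Ici 1 := by
    rintro _ ⟨u, hu, rfl⟩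
    exact one_le_exp (hk hu)
  have hint : IntegrableOn (fun x => x⁻¹ • s x) (exp '' k) :=
    (hs _ hek (hkc.image continuous_exp)).continuousOn_smul
      (continuousOn_inv₀.mono fun x hx => (zero_lt_one.trans_le (hek hx)).ne')
      (hkc.image continuous_exp)
  rw [integrableOn_image_iff_integrableOn_abs_deriv_smul hkc.measurableSet
    (fun u _ => (hasDerivAt_exp u).hasDerivWithinAt) exp_injective.injOn] at hint
  refine hint.congr_fun (fun u _ => ?_) hkc.measurableSet
  simp [abs_of_pos (exp_pos u), (exp_pos u).ne']

noncomputable def cesaroMean (σ : ℝ → ℝ) (y : ℝ) : ℝ := ⨍ u in (0 : ℝ)..y, σ u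

theorem sub_mul_interval_average (f : ℝ → ℝ) (a b : ℝ) :
    (b - a) * ⨍ x in a..b, f x = ∫ x in a..b, f x := by
  rcases eq_or_ne a b with rfl | hab
  · simp
  · rw [interval_average_eq_div, mul_div_cancel₀ _ (sub_ne_zero.2 hab.symm)]

theorem le_interval_average {f : ℝ → ℝ} {a b c : ℝ} (hab : a < b)
    (hf : IntervalIntegrable f volume a b) (h : ∀ x ∈ Icc a b, c ≤ f x) :
    c ≤ ⨍ x in a..b, f x := by
  rw [interval_average_eq_div, le_div_iff₀ (sub_pos.2 hab), mul_comm, ← smul_eq_mul,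
    ← intervalIntegral.integral_const]
  exact integral_mono_on hab.le intervalIntegrable_const hf h

theorem interval_average_le {f : ℝ → ℝ} {a b c : ℝ} (hab : a < b)
    (hf : IntervalIntegrable f volume a b) (h : ∀ x ∈ Icc a b, f x ≤ c) :
    ⨍ x in a..b, f x ≤ c := by
  rw [interval_average_eq_div, div_le_iff₀ (sub_pos.2 hab), mul_comm, ← smul_eq_mul,
    ← intervalIntegral.integral_const]
  exact integral_mono_on hab.le hf intervalIntegrable_const h

theorem MeasureTheory.LocallyIntegrableOn.intervalIntegrable_of_nonneg {f : ℝ → ℝ}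
    (hf : LocallyIntegrableOn f (Ici 0)) {a b : ℝ} (ha : 0 ≤ a) (hb : 0 ≤ b) :
    IntervalIntegrable f volume a b :=
  (hf.integrableOn_compact_subset (fun _ hx => (le_min ha hb).trans hx.1)
    isCompact_uIcc).intervalIntegrable

theorem mul_cesaroMean (σ : ℝ → ℝ) (y : ℝ) : y * cesaroMean σ y = ∫ u in (0 : ℝ)..y, σ u := by
  simpa [cesaroMean] using sub_mul_interval_average σ 0 y

theorem forall_ge_of_geometric_step {P : ℝ → Prop} {X μ : ℝ} (hX : 0 < X) (hμ : 1 < μ)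
    (hbase : ∀ x ∈ Icc X (μ * X), P x) (hstep : ∀ x, μ * X < x → P (x / μ) → P x) :
    ∀ x, X ≤ x → P x := by
  have hμ0 : 0 < μ := zero_lt_one.trans hμ
  have key : ∀ n : ℕ, ∀ x, X ≤ x → x ≤ μ ^ n * X → P x := by
    intro n
    induction n with
    | zero =>
      intro x hx hxn
      exact hbase x ⟨hx, by nlinarith⟩
    | succ n ih =>
      intro x hx hxn
      rcases le_or_gt x (μ * X) with hxX | hxX
      · exact hbase x ⟨hx, hxX⟩
      · refine hstep x hxX (ih _ ?_ ?_)
        · rw [le_div_iff₀ hμ0]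
          linarith
        · rw [div_le_iff₀ hμ0]
          rw [pow_succ] at hxn
          linarith
  intro x hx
  obtain ⟨n, hn⟩ := pow_unbounded_of_one_lt (x / X) hμ
  exact key n x hx ((div_lt_iff₀ hX).1 hn).le

section Cesaro

variable {σ : ℝ → ℝ}

theorem abs_cesaroMean_le (hσ : LocallyIntegrableOn σ (Ici 0)) {a y B : ℝ} (ha : 0 < a)
    (hay : a ≤ y) (hyB : y ≤ B) :
    |cesaroMean σ y| ≤ (∫ u in (0 : ℝ)..B, |σ u|) / a := by
  have hy : 0 < y := ha.trans_le hay
  have hint : ∫ u in (0 : ℝ)..y, |σ u| ≤ ∫ u in (0 : ℝ)..B, |σ u| :=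
    integral_mono_interval le_rfl hy.le hyB (Eventually.of_forall fun _ => abs_nonneg _)
      (hσ.intervalIntegrable_of_nonneg le_rfl (hy.le.trans hyB)).abs
  rw [cesaroMean, interval_average_eq_div, sub_zero, abs_div, abs_of_pos hy]
  calc |∫ u in (0 : ℝ)..y, σ u| / y ≤ (∫ u in (0 : ℝ)..B, |σ u|) / y :=
        div_le_div_of_nonneg_right ((abs_integral_le_integral_abs hy.le).trans hint) hy.le
    _ ≤ (∫ u in (0 : ℝ)..B, |σ u|) / a :=
        div_le_div_of_nonneg_left
          (integral_nonneg (hy.le.trans hyB) fun _ _ => abs_nonneg _) ha hay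

theorem cesaroMean_sub_ge_of_forall_sub_le (hσ : LocallyIntegrableOn σ (Ici 0))
    {x' x t e : ℝ} (hx' : 0 ≤ x') (hx'x : x' < x) (hxt : x < t)
    (h : ∀ v ∈ Icc x' x, ∀ u ∈ Icc x t, σ v - e ≤ σ u) :
    (t - x) / t * (x' / (x - x') * (cesaroMean σ x - cesaroMean σ x') - e) ≤
      cesaroMean σ t - cesaroMean σ x := by
  have hx : 0 < x := hx'.trans_lt hx'x
  have hint : ∀ {a b}, 0 ≤ a → 0 ≤ b → IntervalIntegrable σ volume a b :=
    hσ.intervalIntegrable_of_nonneg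
  set A := ⨍ v in x'..x, σ v
  set B := ⨍ u in x..t, σ u
  have hAB : A - e ≤ B := le_interval_average hxt (hint hx.le (hx.trans hxt).le) fun u hu =>
    sub_le_iff_le_add.2 <| interval_average_le hx'x (hint hx' hx.le) fun v hv =>
      sub_le_iff_le_add.1 (h v hv u hu)
  have hsplit : ∀ {a b}, 0 ≤ a → 0 ≤ b →
      b * cesaroMean σ b = a * cesaroMean σ a + (b - a) * ⨍ u in a..b, σ u := by
    intro a b ha hb
    rw [mul_cesaroMean, mul_cesaroMean, sub_mul_interval_average,
      integral_add_adjacent_intervals (hint le_rfl ha) (hint ha hb)]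
  have hx'x_eq := hsplit hx' hx.le
  have hxt_eq := hsplit hx.le (hx.trans hxt).le
  calc (t - x) / t * (x' / (x - x') * (cesaroMean σ x - cesaroMean σ x') - e)
      = (t - x) / t * (A - e - cesaroMean σ x) := by
        congr 1
        field_simp [(sub_pos.2 hx'x).ne']
        linarith
    _ ≤ (t - x) / t * (B - cesaroMean σ x) := by
        gcongr
        exact div_nonneg (sub_pos.2 hxt).le (hx.trans hxt).le
    _ = cesaroMean σ t - cesaroMean σ x := by
        field_simp [(hx.trans hxt).ne']
        linarith

theorem cesaroMean_sub_ge_of_drop_le (hσ : LocallyIntegrableOn σ (Ici 0))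
    {μ lam e K x t : ℝ} (hμ : 1 < μ) (hlam : 1 < lam) (hlamμ : lam ≤ μ) (he : 0 ≤ e)
    (hK : 0 ≤ K) (hx : 0 < x) (hdrop : ∀ v, x / μ ≤ v → ∀ u ∈ Ioc v (μ ^ 2 * v), σ v - e ≤ σ u)
    (hKx : -K ≤ cesaroMean σ x - cesaroMean σ (x / μ)) (ht : t ∈ Ioc x (lam * x)) :
    -((lam - 1) / lam * (K / (μ - 1) + e)) ≤ cesaroMean σ t - cesaroMean σ x := by
  have hμ0 : 0 < μ := zero_lt_one.trans hμ
  have hx'x : x / μ < x := div_lt_self hx hμ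
  refine le_trans ?_
    (cesaroMean_sub_ge_of_forall_sub_le (e := e) hσ (by positivity) hx'x ht.1 ?_)
  · have hratio : x / μ / (x - x / μ) = 1 / (μ - 1) := by
      field_simp [(sub_pos.2 hμ).ne']
    have ht0 : 0 < t := hx.trans ht.1
    have hc0 : 0 ≤ (t - x) / t := div_nonneg (sub_pos.2 ht.1).le ht0.le
    have hc1 : (t - x) / t ≤ (lam - 1) / lam := by
      rw [div_le_div_iff₀ ht0 (zero_lt_one.trans hlam)]
      nlinarith [ht.2]
    have hC : 0 ≤ K / (μ - 1) + e := by
      have := div_nonneg hK (sub_pos.2 hμ).le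
      linarith
    have hbr : -(K / (μ - 1) + e) ≤
        x / μ / (x - x / μ) * (cesaroMean σ x - cesaroMean σ (x / μ)) - e := by
      have := div_le_div_of_nonneg_right hKx (sub_pos.2 hμ).le
      rw [neg_div] at this
      rw [hratio, one_div_mul_eq_div]
      linarith
    calc -((lam - 1) / lam * (K / (μ - 1) + e)) = (lam - 1) / lam * -(K / (μ - 1) + e) := by
          ring
      _ ≤ (t - x) / t * -(K / (μ - 1) + e) := mul_le_mul_of_nonpos_right hc1 (by linarith)
      _ ≤ _ := mul_le_mul_of_nonneg_left hbr hc0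
  · intro v hv u hu
    rcases (hv.2.trans hu.1).eq_or_lt with rfl | hvu
    · linarith
    refine hdrop v hv.1 u ⟨hvu, ?_⟩
    calc u ≤ lam * x := hu.2.trans ht.2
      _ ≤ μ * x := by gcongr
      _ = μ ^ 2 * (x / μ) := by field_simp
      _ ≤ μ ^ 2 * v := by gcongr; exact hv.1

theorem exists_boundedDrop_cesaroMean (hσ : LocallyIntegrableOn σ (Ici 0)) {μ : ℝ} (hμ : 1 < μ)
    (hdrop : BoundedDrop σ (μ ^ 2) 1) : ∃ K, 1 ≤ K ∧ BoundedDrop (cesaroMean σ) μ K := by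
  have hμ0 : 0 < μ := zero_lt_one.trans hμ
  obtain ⟨X, hX⟩ := eventually_atTop.1 hdrop
  set X₀ := max X 1
  have hX₀ : 0 < X₀ := zero_lt_one.trans_le (le_max_right _ _)
  set C := (∫ u in (0 : ℝ)..μ ^ 2 * X₀, |σ u|) / X₀
  have hC : 0 ≤ C := div_nonneg (integral_nonneg (by positivity) fun _ _ => abs_nonneg _) hX₀.le
  refine ⟨2 * C + 1, by linarith, eventually_atTop.2 ⟨X₀, ?_⟩⟩
  refine forall_ge_of_geometric_step hX₀ hμ (fun x hx t ht => ?_) (fun x hx hK t ht => ?_)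
  · have hbound : ∀ y, X₀ ≤ y → y ≤ μ ^ 2 * X₀ → |cesaroMean σ y| ≤ C :=
      fun y hy hyB => abs_cesaroMean_le hσ hX₀ hy hyB
    have htB : t ≤ μ ^ 2 * X₀ := by
      calc t ≤ μ * x := ht.2
        _ ≤ μ * (μ * X₀) := by gcongr; exact hx.2
        _ = μ ^ 2 * X₀ := by ring
    have h₁ := abs_le.1 (hbound t (hx.1.trans ht.1.le) htB)
    have h₂ := abs_le.1 (hbound x hx.1 (ht.1.le.trans htB))
    linarith
  · have hx0 : 0 < x := (mul_pos hμ0 hX₀).trans hx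
    have hx' : X₀ < x / μ := by rwa [lt_div_iff₀ hμ0, mul_comm]
    have hKx := hK x ⟨div_lt_self hx0 hμ, le_of_eq (by field_simp)⟩
    have hdrop' : ∀ v, x / μ ≤ v → ∀ u ∈ Ioc v (μ ^ 2 * v), σ v - 1 ≤ σ u :=
      fun v hv => hX v ((le_max_left _ _).trans (hx'.le.trans hv))
    have hstep := cesaroMean_sub_ge_of_drop_le (K := 2 * C + 1) hσ hμ hμ le_rfl zero_le_one
      (by linarith) hx0 hdrop' (by linarith) ht
    have hcoef : (μ - 1) / μ * ((2 * C + 1) / (μ - 1) + 1) ≤ 2 * C + 1 := by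
      rw [show (μ - 1) / μ * ((2 * C + 1) / (μ - 1) + 1) = (2 * C + 1 + μ - 1) / μ by
        field_simp [(sub_pos.2 hμ).ne']; ring, div_le_iff₀ hμ0]
      nlinarith
    linarith

theorem SlowlyDecreasing.cesaroMean (hσ : LocallyIntegrableOn σ (Ici 0))
    (h : SlowlyDecreasing σ) : SlowlyDecreasing (cesaroMean σ) := by
  intro ε hε
  obtain ⟨l₁, hl₁, h₁⟩ := h 1 one_pos
  obtain ⟨l₂, hl₂, h₂⟩ := h (ε / 2) (half_pos hε)
  set μ := √(min l₁ l₂)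
  have hμ : 1 < μ := (lt_sqrt zero_le_one).2 (by simp [hl₁, hl₂])
  have hμ2 : μ ^ 2 = min l₁ l₂ := sq_sqrt (by positivity)
  obtain ⟨K, hK, hKdrop⟩ :=
    exists_boundedDrop_cesaroMean hσ hμ (hμ2 ▸ h₁.mono_ratio (min_le_left _ _))
  set δ := min 1 (ε / (2 * K))
  have hδ : 0 < δ := lt_min one_pos (by positivity)
  set lam := 1 + (μ - 1) * δ
  have hlam : 1 < lam := by nlinarith
  have hlamμ : lam ≤ μ := by nlinarith [min_le_left 1 (ε / (2 * K))]
  refine ⟨lam, hlam, ?_⟩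
  have hdiv : Tendsto (· / μ) atTop atTop := tendsto_id.atTop_div_const (by positivity)
  filter_upwards [hdiv.eventually hKdrop,
    hdiv.eventually (eventually_forall_ge_atTop.2 (hμ2 ▸ h₂.mono_ratio (min_le_right _ _))),
    eventually_gt_atTop 0] with x hKx hdrop hx t ht
  have hstep := cesaroMean_sub_ge_of_drop_le (K := K) hσ hμ hlam hlamμ (half_pos hε).le
    (by linarith) hx hdrop (by linarith [hKx x ⟨div_lt_self hx hμ, le_of_eq (by field_simp)⟩]) ht
  have hcoef : (lam - 1) / lam * (K / (μ - 1) + ε / 2) ≤ ε := by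
    have hμ1 : 0 < μ - 1 := sub_pos.2 hμ
    have hδK : δ * K ≤ ε / 2 := by
      have := min_le_right 1 (ε / (2 * K))
      rw [le_div_iff₀ (by positivity)] at this
      linarith
    have hlamK : (lam - 1) * (K / (μ - 1)) = δ * K := by
      field_simp
      ring
    calc (lam - 1) / lam * (K / (μ - 1) + ε / 2)
        = (lam - 1) / lam * (K / (μ - 1)) + (lam - 1) / lam * (ε / 2) := by ring
      _ ≤ (lam - 1) * (K / (μ - 1)) + 1 * (ε / 2) := by
          gcongr
          · exact div_le_self (sub_pos.2 hlam).le hlam.le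
          · exact (div_le_one (by linarith)).2 (by linarith)
      _ ≤ ε := by linarith
  linarith

end Cesaro

theorem stmt13 (s : ℝ → ℝ)
    (hs : LocallyIntegrableOn s (Ici (1 : ℝ)))
    (hsd : SlowlyDecreasingL1 s) :
    SlowlyDecreasingL1 (fun t : ℝ => (Real.log t)⁻¹ * ∫ x in (1 : ℝ)..t, s x / x) := by
  rw [slowlyDecreasingL1_iff_comp_exp] at hsd ⊢
  refine (hsd.cesaroMean hs.comp_exp).congr ?_
  filter_upwards [eventually_ge_atTop 0] with y hy
  simp [cesaroMean, interval_average_eq, integral_div_self_eq_integral_comp_exp s hy]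
end

section
/- If s : [1,∞) → ℂ is locally integrable and slowly oscillating with respect to logarithmic summability, then its logarithmic mean τ(t) := (1/log t)·∫₁ᵗ s(x)/x dx is also slowly oscillating with respect to logarithmic summability. -/
open Filter MeasureTheory Set intervalIntegral

/-- `s` is slowly oscillating with respect to logarithmic summability `(L,1)`. -/
def SlowlyOscillatingL1 (s : ℝ → ℂ) : Prop :=
  (⨅ l ∈ Set.Ioi (1 : ℝ),
    Filter.limsup (fun x : ℝ =>
      sSup ((fun t : ℝ => ((‖s t - s x‖ : ℝ) : EReal)) '' Set.Ioc x (x ^ l)))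
      Filter.atTop) = 0

/-!
Write `τ` for the logarithmic mean. For every constant `c`,
`log t • (c - τ t) = log x • (c - τ x) + ∫ u in x..t, (c - s u) / u`.
With `c = τ x` this gives `‖τ t - τ x‖ ≤ (1 - log x / log t) * sup_{x < u ≤ t} ‖s u - τ x‖`,
and the factor is at most `l - 1` when `t ≤ x ^ l`; so it suffices that `s - τ` is eventually
bounded. Chaining the oscillation bound along `u, u ^ l, u ^ l ^ 2, …` gives
`‖s x - s u‖ ≤ (log (log x) - log (log u)) / log l + 1`, and integrating this against `du / u`
over `[X, x]` (with `c = s x` in the identity) shows `log x * ‖s x - τ x‖ = O(log x)`.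
-/

open Real

theorem slowlyOscillatingL1_iff {s : ℝ → ℂ} :
    SlowlyOscillatingL1 s ↔
      ∀ ε > 0, ∃ l > (1 : ℝ), ∀ᶠ x in atTop, ∀ t ∈ Ioc x (x ^ l), ‖s t - s x‖ ≤ ε := by
  constructor
  · intro h ε hε
    have hlt : (⨅ l ∈ Ioi (1 : ℝ), limsup (fun x : ℝ =>
        sSup ((fun t : ℝ => ((‖s t - s x‖ : ℝ) : EReal)) '' Ioc x (x ^ l))) atTop) < ε := by
      rw [h]; exact_mod_cast hε
    simp only [iInf_lt_iff] at hlt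
    obtain ⟨l, hl, hlim⟩ := hlt
    refine ⟨l, hl, ?_⟩
    filter_upwards [eventually_lt_of_limsup_lt hlim] with x hx t ht
    exact_mod_cast ((le_sSup (mem_image_of_mem _ ht)).trans_lt hx).le
  · intro h
    apply le_antisymm
    · refine le_of_forall_gt_imp_ge_of_dense fun c hc => ?_
      obtain ⟨r, hr, hrc⟩ := EReal.lt_iff_exists_real_btwn.mp hc
      obtain ⟨l, hl, hev⟩ := h r (by exact_mod_cast hr)
      refine (iInf₂_le l hl).trans (le_trans ?_ hrc.le)
      refine limsup_le_of_le (by isBoundedDefault) ?_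
      filter_upwards [hev] with x hx
      refine sSup_le ?_
      rintro _ ⟨t, ht, rfl⟩
      exact EReal.coe_le_coe_iff.mpr (hx t ht)
    · refine le_iInf₂ fun l hl => le_limsup_of_frequently_le' (Eventually.frequently ?_)
      filter_upwards [eventually_gt_atTop 1] with x hx
      have hmem : x ^ l ∈ Ioc x (x ^ l) :=
        ⟨by simpa using rpow_lt_rpow_of_exponent_lt hx hl, le_rfl⟩
      exact (EReal.coe_nonneg.mpr (norm_nonneg _)).trans (le_sSup (mem_image_of_mem _ hmem))

section Oscillation

variable {E : Type*} [SeminormedAddCommGroup E] {f : ℝ → E} {l X : ℝ}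

theorem norm_sub_le_of_le_rpow_pow_s14 (hl : 1 < l) (hX : 1 < X)
    (hf : ∀ x ≥ X, ∀ t ∈ Ioc x (x ^ l), ‖f t - f x‖ ≤ 1) (n : ℕ) {u x : ℝ} (hu : X ≤ u)
    (hux : u ≤ x) (hx : x ≤ u ^ l ^ n) : ‖f x - f u‖ ≤ n := by
  induction n generalizing u with
  | zero =>
    obtain rfl : x = u := le_antisymm (by simpa using hx) hux
    simp
  | succ n ih =>
    have hu_lt : u < u ^ l := by simpa using rpow_lt_rpow_of_exponent_lt (hX.trans_le hu) hl
    rcases le_or_gt x (u ^ l) with hxl | hxl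
    · rcases hux.eq_or_lt with rfl | hux
      · rw [sub_self, norm_zero]
        positivity
      · have := hf u hu x ⟨hux, hxl⟩
        push_cast
        linarith [n.cast_nonneg (α := ℝ)]
    · have hx' : x ≤ (u ^ l) ^ l ^ n := by
        rwa [← rpow_mul (by linarith), ← pow_succ']
      calc ‖f x - f u‖ ≤ ‖f x - f (u ^ l)‖ + ‖f (u ^ l) - f u‖ :=
            norm_sub_le_norm_sub_add_norm_sub _ _ _
        _ ≤ n + 1 :=
            add_le_add (ih (hu.trans hu_lt.le) hxl.le hx') (hf u hu _ ⟨hu_lt, le_rfl⟩)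
        _ = (n + 1 : ℕ) := by push_cast; ring

theorem norm_sub_le_log_log_sub (hl : 1 < l) (hX : 1 < X)
    (hf : ∀ x ≥ X, ∀ t ∈ Ioc x (x ^ l), ‖f t - f x‖ ≤ 1) {u x : ℝ} (hu : X ≤ u) (hux : u ≤ x) :
    ‖f x - f u‖ ≤ (log (log x) - log (log u)) / log l + 1 := by
  have hu1 : 1 < u := hX.trans_le hu
  have hlogu : 0 < log u := log_pos hu1
  have hlogx : 0 < log x := log_pos (hu1.trans_le hux)
  set n := ⌈(log (log x) - log (log u)) / log l⌉₊
  have hn : (log (log x) - log (log u)) / log l ≤ n := Nat.le_ceil _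
  have hlogx_le : log x ≤ l ^ n * log u := by
    rw [div_le_iff₀ (log_pos hl)] at hn
    calc log x = exp (log (log x)) := (exp_log hlogx).symm
      _ ≤ exp (n * log l + log (log u)) := exp_le_exp.mpr (by linarith)
      _ = l ^ n * log u := by
        rw [exp_add, exp_log hlogu, ← log_pow, exp_log (pow_pos (by linarith) n)]
  have hx : x ≤ u ^ l ^ n := by
    calc x = exp (log x) := (exp_log (by linarith)).symm
      _ ≤ exp (l ^ n * log u) := exp_le_exp.mpr hlogx_le
      _ = u ^ l ^ n := by
        rw [rpow_def_of_pos (by linarith), mul_comm]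
  have hR : 0 ≤ (log (log x) - log (log u)) / log l :=
    div_nonneg (sub_nonneg.mpr (log_le_log hlogu (log_le_log (by linarith) hux))) (log_pos hl).le
  exact (norm_sub_le_of_le_rpow_pow_s14 hl hX hf n hu hux hx).trans (Nat.ceil_lt_add_one hR).le

end Oscillation

theorem eventually_mul_log_log_add_le_log (a b : ℝ) :
    ∀ᶠ x in atTop, a * log (log x) + b ≤ log x := by
  have ho : (fun x => a * log (log x) + b) =o[atTop] log :=
    ((isLittleO_log_id_atTop.comp_tendsto tendsto_log_atTop).const_mul_left a).add
      isLittleO_const_log_atTop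
  filter_upwards [ho.bound one_pos, eventually_ge_atTop 1] with x hx hx1
  rw [one_mul, norm_of_nonneg (log_nonneg hx1)] at hx
  exact (le_norm_self _).trans hx

theorem norm_integral_div_le_of_norm_le_log_log_sub {g : ℝ → ℂ} {c X x : ℝ} (hc : 0 < c)
    (hX : 1 < X) (hXx : X ≤ x)
    (hg : ∀ u ∈ Icc X x, ‖g u‖ ≤ (log (log x) - log (log u)) / c + 1) :
    ‖∫ u in X..x, g u / u‖ ≤ (c⁻¹ + 1) * log x := by
  have hderiv : ∀ u ∈ uIcc X x, HasDerivAt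
      (fun u => log u * ((log (log x) - log (log u) + 1) / c + 1))
      (((log (log x) - log (log u)) / c + 1) / u) u := by
    intro u hu
    rw [uIcc_of_le hXx] at hu
    have hu0 : 0 < u := by linarith [hu.1]
    have hlogu : log u ≠ 0 := (log_pos (hX.trans_le hu.1)).ne'
    have h₁ := hasDerivAt_log hu0.ne'
    refine (h₁.mul ((((h₁.log hlogu).const_sub (log (log x))).add_const 1).div_const c
      |>.add_const 1)).congr_deriv ?_
    field_simp
    ring
  have hcont : ContinuousOn (fun u => ((log (log x) - log (log u)) / c + 1) / u) (uIcc X x) := by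
    rw [uIcc_of_le hXx]
    intro u hu
    have hu1 : 1 < u := hX.trans_le hu.1
    have : log u ≠ 0 := (log_pos hu1).ne'
    have : u ≠ 0 := by positivity
    exact ContinuousAt.continuousWithinAt (by fun_prop (disch := assumption))
  refine (norm_integral_le_of_norm_le hXx (ae_of_all _ fun u hu => ?_)
    hcont.intervalIntegrable).trans ?_
  · have hu0 : 0 < u := by linarith [hu.1]
    rw [norm_div, Complex.norm_real, norm_of_nonneg hu0.le]
    exact div_le_div_of_nonneg_right (hg u (Ioc_subset_Icc_self hu)) hu0.le
  rw [integral_eq_sub_of_hasDerivAt hderiv hcont.intervalIntegrable]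
  have hX0 : 0 ≤ log X * ((log (log x) - log (log X) + 1) / c + 1) := by
    have := log_le_log (log_pos hX) (log_le_log (by linarith) hXx)
    have := log_pos hX
    positivity
  simp only [sub_self, zero_add, one_div]
  linarith

theorem norm_integral_div_le_of_norm_le {g : ℝ → ℂ} {a b C : ℝ} (ha : 0 < a) (hab : a ≤ b)
    (hg : ∀ u ∈ Ioc a b, ‖g u‖ ≤ C) : ‖∫ u in a..b, g u / u‖ ≤ C * (log b - log a) := by
  have hinv : IntervalIntegrable (fun u => u⁻¹) volume a b :=
    intervalIntegrable_inv_iff.mpr (Or.inr fun h => by linarith [(uIcc_of_le hab ▸ h).1])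
  refine (norm_integral_le_of_norm_le hab (ae_of_all _ fun u hu => ?_)
    (hinv.const_mul C)).trans_eq ?_
  · have hu0 : 0 < u := ha.trans hu.1
    rw [norm_div, Complex.norm_real, norm_of_nonneg hu0.le, ← div_eq_mul_inv]
    exact div_le_div_of_nonneg_right (hg u hu) hu0.le
  · rw [intervalIntegral.integral_const_mul, integral_inv_of_pos ha (ha.trans_le hab),
      log_div (ha.trans_le hab).ne' ha.ne']

theorem integral_const_div_ofReal (c : ℂ) {a b : ℝ} (ha : 0 < a) (hb : 0 < b) :
    ∫ u in a..b, c / (u : ℂ) = c * (log b - log a : ℝ) := by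
  simp_rw [div_eq_mul_inv, ← Complex.ofReal_inv]
  rw [intervalIntegral.integral_const_mul, intervalIntegral.integral_ofReal,
    integral_inv_of_pos ha hb, log_div hb.ne' ha.ne']

/-- The logarithmic mean `τ` of the paper. -/
noncomputable def logMean (s : ℝ → ℂ) (t : ℝ) : ℂ :=
  (log t)⁻¹ • ∫ x in (1 : ℝ)..t, s x / (x : ℂ)

section LogMean

variable {s : ℝ → ℂ}

theorem MeasureTheory.LocallyIntegrableOn.intervalIntegrable_div_ofReal
    (hs : LocallyIntegrableOn s (Ici 1)) {a b : ℝ} (ha : 1 ≤ a) (hb : 1 ≤ b) :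
    IntervalIntegrable (fun u => s u / u) volume a b := by
  have hsub : uIcc a b ⊆ Ici 1 := fun u hu => (le_min ha hb).trans hu.1
  refine IntegrableOn.intervalIntegrable ?_
  simp_rw [div_eq_mul_inv]
  refine (hs.integrableOn_compact_subset hsub isCompact_uIcc).mul_continuousOn ?_ isCompact_uIcc
  exact (Complex.continuous_ofReal.continuousOn).inv₀ fun u hu =>
    Complex.ofReal_ne_zero.mpr (zero_lt_one.trans_le (hsub hu)).ne'

theorem log_smul_sub_logMean (hs : LocallyIntegrableOn s (Ici 1)) (c : ℂ) {x t : ℝ}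
    (hx : 1 < x) (ht : 1 < t) :
    log t • (c - logMean s t) = log x • (c - logMean s x) + ∫ u in x..t, (c - s u) / u := by
  have hmean : ∀ y > 1, log y • logMean s y = ∫ u in (1 : ℝ)..y, s u / u := fun y hy =>
    smul_inv_smul₀ (log_pos hy).ne' _
  have h1x := hs.intervalIntegrable_div_ofReal le_rfl hx.le
  have hxt := hs.intervalIntegrable_div_ofReal hx.le ht.le
  have hconst := (locallyIntegrableOn_const (μ := volume) (s := Ici (1 : ℝ)) c)
    |>.intervalIntegrable_div_ofReal hx.le ht.le
  simp_rw [sub_div]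
  rw [smul_sub, smul_sub, hmean t ht, hmean x hx,
    ← integral_add_adjacent_intervals h1x hxt,
    integral_sub hconst hxt, integral_const_div_ofReal c (by linarith) (by linarith)]
  simp only [Complex.real_smul]
  push_cast
  ring

theorem eventually_norm_sub_logMean_le (hs : LocallyIntegrableOn s (Ici 1)) {l : ℝ}
    (hl : 1 < l) (hosc : ∀ᶠ x in atTop, ∀ t ∈ Ioc x (x ^ l), ‖s t - s x‖ ≤ 1) :
    ∀ᶠ x in atTop, ‖s x - logMean s x‖ ≤ (log l)⁻¹ + 2 := by
  obtain ⟨X', hX'⟩ := eventually_atTop.mp hosc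
  set X := max X' 2
  have hX : 1 < X := by linarith [le_max_right X' 2]
  have hf : ∀ x ≥ X, ∀ t ∈ Ioc x (x ^ l), ‖s t - s x‖ ≤ 1 := fun x hx =>
    hX' x (le_of_max_le_left hx)
  have hc := log_pos hl
  set c := log l
  set K := ‖s X - logMean s X‖
  filter_upwards [eventually_ge_atTop X, eventually_mul_log_log_add_le_log (log X / c)
    (log X * (1 + K - log (log X) / c))] with x hx hsmall
  have hlogx : 0 < log x := log_pos (hX.trans_le hx)
  have hhead : ‖log X • (s x - logMean s X)‖ ≤ log x := by
    rw [norm_smul, norm_of_nonneg (log_pos hX).le]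
    calc log X * ‖s x - logMean s X‖
        ≤ log X * ((log (log x) - log (log X)) / c + 1 + K) := by
          gcongr
          · exact (log_pos hX).le
          · exact (norm_sub_le_norm_sub_add_norm_sub _ _ _).trans
              (add_le_add_left (norm_sub_le_log_log_sub hl hX hf le_rfl hx) _)
      _ = log X / c * log (log x) + log X * (1 + K - log (log X) / c) := by ring
      _ ≤ log x := hsmall
  have htail : ‖∫ u in X..x, (s x - s u) / u‖ ≤ (c⁻¹ + 1) * log x :=
    norm_integral_div_le_of_norm_le_log_log_sub hc hX hx fun u hu =>
      norm_sub_le_log_log_sub hl hX hf hu.1 hu.2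
  have hmul : log x * ‖s x - logMean s x‖ ≤ log x * (c⁻¹ + 2) := by
    rw [← norm_of_nonneg hlogx.le, ← norm_smul,
      log_smul_sub_logMean hs (s x) hX (hX.trans_le hx), norm_of_nonneg hlogx.le]
    linarith [norm_add_le (log X • (s x - logMean s X)) (∫ u in X..x, (s x - s u) / u)]
  exact le_of_mul_le_mul_left hmul hlogx

theorem norm_logMean_sub_logMean_le (hs : LocallyIntegrableOn s (Ici 1)) {x t l C : ℝ}
    (hx : 1 < x) (hxt : x < t) (htl : t ≤ x ^ l)
    (hC : ∀ u ∈ Ioc x t, ‖s u - logMean s x‖ ≤ C) :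
    ‖logMean s t - logMean s x‖ ≤ C * (l - 1) := by
  have hlogx := log_pos hx
  have hlogxt : log x < log t := log_lt_log (by linarith) hxt
  have hlogtl : log t ≤ l * log x := by
    rw [← log_rpow (by linarith)]
    exact log_le_log (by linarith) htl
  have hl : 1 < l := by nlinarith
  have hC0 : 0 ≤ C := (norm_nonneg _).trans (hC t ⟨hxt, le_rfl⟩)
  have hid := log_smul_sub_logMean hs (logMean s x) hx (hx.trans hxt)
  rw [sub_self, smul_zero, zero_add] at hid
  have hmul : log t * ‖logMean s t - logMean s x‖ ≤ log t * (C * (l - 1)) := by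
    calc log t * ‖logMean s t - logMean s x‖ = ‖log t • (logMean s x - logMean s t)‖ := by
          rw [norm_smul, norm_sub_rev, norm_of_nonneg (by linarith)]
      _ ≤ C * (log t - log x) := by
          rw [hid]
          exact norm_integral_div_le_of_norm_le (by linarith) hxt.le fun u hu => by
            rw [norm_sub_rev]; exact hC u hu
      _ ≤ log t * (C * (l - 1)) := by nlinarith [mul_nonneg hC0 (sub_nonneg.mpr hl.le)]
  exact le_of_mul_le_mul_left hmul (by linarith)

end LogMean

theorem stmt14 (s : ℝ → ℂ)
    (hs : LocallyIntegrableOn s (Ici (1 : ℝ)))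
    (hso : SlowlyOscillatingL1 s) :
    SlowlyOscillatingL1
      (fun t : ℝ => (Real.log t)⁻¹ • ∫ x in (1 : ℝ)..t, s x / (x : ℂ)) := by
  change SlowlyOscillatingL1 (logMean s)
  rw [slowlyOscillatingL1_iff] at hso ⊢
  intro ε hε
  obtain ⟨l₁, hl₁, hosc⟩ := hso 1 one_pos
  set C := 1 + ((log l₁)⁻¹ + 2)
  have hC : 0 < C := by have := log_pos hl₁; positivity
  refine ⟨min l₁ (1 + ε / C), lt_min hl₁ (by linarith [div_pos hε hC]), ?_⟩
  filter_upwards [hosc, eventually_norm_sub_logMean_le hs hl₁ hosc, eventually_gt_atTop 1]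
    with x hosc_x hmean_x hx t ht
  have hC_bound : ∀ u ∈ Ioc x t, ‖s u - logMean s x‖ ≤ C := fun u hu =>
    (norm_sub_le_norm_sub_add_norm_sub _ _ _).trans (add_le_add
      (hosc_x u ⟨hu.1, hu.2.trans (ht.2.trans
        (rpow_le_rpow_of_exponent_le hx.le (min_le_left _ _)))⟩) hmean_x)
  calc ‖logMean s t - logMean s x‖ ≤ C * (min l₁ (1 + ε / C) - 1) :=
        norm_logMean_sub_logMean_le hs hx ht.1 ht.2 hC_bound
    _ ≤ C * (ε / C) := by gcongr; linarith [min_le_right l₁ (1 + ε / C)]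
    _ = ε := mul_div_cancel₀ ε hC.ne'
end

section
/- (Classical Tauberian theorem for (L,1)) If s : [1,∞) → ℝ is locally integrable, slowly decreasing with respect to logarithmic summability, and its logarithmic mean τ(t) := (1/log t)·∫₁ᵗ s(x)/x dx converges to ℓ as t → ∞, then s(x) → ℓ as x → ∞. -/
open Filter MeasureTheory Set intervalIntegral

/-!
For every `ε > 0` slow decrease yields an exponent `l > 1` with `s t ≥ s x - ε` whenever
`x < t ≤ x ^ l`. Averaging against `dt / t` over `[x, x ^ l]` and over `[x ^ (1 / l), x]`
then squeezes `s x` between two logarithmic averages, up to `ε`. The average over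
`[x ^ n, x ^ m]` equals `(m τ(x ^ m) - n τ(x ^ n)) / (m - n)` with `τ` the logarithmic mean,
so both tend to `ℓ`.
-/

open Real Topology

theorem SlowlyDecreasingL1.exists_eventually_sub_le {s : ℝ → ℝ} (hsd : SlowlyDecreasingL1 s)
    {ε : ℝ} (hε : 0 < ε) :
    ∃ l : ℝ, 1 < l ∧ ∀ᶠ x in atTop, ∀ t ∈ Ioc x (x ^ l), s x - ε ≤ s t := by
  have hneg : ((-ε : ℝ) : EReal) < 0 := by exact_mod_cast neg_neg_of_pos hε
  obtain ⟨l, hl, hlim⟩ : ∃ l ∈ Ioi (1 : ℝ), ((-ε : ℝ) : EReal) < liminf (fun x : ℝ =>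
      sInf ((fun t : ℝ => ((s t - s x : ℝ) : EReal)) '' Ioc x (x ^ l))) atTop := by
    simpa only [lt_iSup_iff, exists_prop] using hneg.trans_le hsd
  refine ⟨l, hl, ?_⟩
  filter_upwards [eventually_lt_of_lt_liminf hlim] with x hx t ht
  have : ((-ε : ℝ) : EReal) < ((s t - s x : ℝ) : EReal) :=
    hx.trans_le (sInf_le (mem_image_of_mem _ ht))
  linarith [EReal.coe_lt_coe_iff.mp this]

theorem MeasureTheory.LocallyIntegrableOn.intervalIntegrable_div_id {s : ℝ → ℝ} {S : Set ℝ}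
    (hs : LocallyIntegrableOn s S) {a b : ℝ} (ha : 0 < a) (hab : a ≤ b) (hS : Icc a b ⊆ S) :
    IntervalIntegrable (fun t => s t / t) volume a b := by
  rw [intervalIntegrable_iff_integrableOn_Icc_of_le hab]
  simpa only [div_eq_mul_inv] using
    (hs.integrableOn_compact_subset hS isCompact_Icc).mul_continuousOn
      (continuousOn_inv₀.mono fun _ ht => (ha.trans_le ht.1).ne') isCompact_Icc

theorem intervalIntegrable_const_div_id (c : ℝ) {a b : ℝ} (ha : 0 < a) (hab : a ≤ b) :
    IntervalIntegrable (fun t => c / t) volume a b :=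
  ContinuousOn.intervalIntegrable_of_Icc hab <|
    continuousOn_const.div continuousOn_id fun _ ht => (ha.trans_le ht.1).ne'

theorem integral_const_div_id (c : ℝ) {a b : ℝ} (ha : 0 < a) (hb : 0 < b) :
    ∫ t in a..b, c / t = c * (log b - log a) := by
  simp only [div_eq_mul_inv, intervalIntegral.integral_const_mul]
  rw [integral_inv_of_pos ha hb, log_div hb.ne' ha.ne']

noncomputable def logAverage (s : ℝ → ℝ) (a b : ℝ) : ℝ :=
  (log b - log a)⁻¹ * ∫ t in a..b, s t / t

section logAverage

variable {s : ℝ → ℝ} {a b c : ℝ}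

theorem le_logAverage_of_le (ha : 0 < a) (hab : a < b)
    (hs : IntervalIntegrable (fun t => s t / t) volume a b) (h : ∀ t ∈ Ioo a b, c ≤ s t) :
    c ≤ logAverage s a b := by
  have hlog : 0 < log b - log a := sub_pos.2 (log_lt_log ha hab)
  have := integral_mono_on_of_le_Ioo hab.le (intervalIntegrable_const_div_id c ha hab.le) hs
    fun t ht => div_le_div_of_nonneg_right (h t ht) (ha.trans ht.1).le
  rw [integral_const_div_id c ha (ha.trans hab)] at this
  rw [logAverage, le_inv_mul_iff₀ hlog]
  linarith

theorem logAverage_le_of_le (ha : 0 < a) (hab : a < b)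
    (hs : IntervalIntegrable (fun t => s t / t) volume a b) (h : ∀ t ∈ Ioo a b, s t ≤ c) :
    logAverage s a b ≤ c := by
  have hlog : 0 < log b - log a := sub_pos.2 (log_lt_log ha hab)
  have := integral_mono_on_of_le_Ioo hab.le hs (intervalIntegrable_const_div_id c ha hab.le)
    fun t ht => div_le_div_of_nonneg_right (h t ht) (ha.trans ht.1).le
  rw [integral_const_div_id c ha (ha.trans hab)] at this
  rw [logAverage, inv_mul_le_iff₀ hlog]
  linarith

end logAverage

section rpow

variable {s : ℝ → ℝ} {ε l x : ℝ}

theorem sub_le_logAverage_rpow (hs : LocallyIntegrableOn s (Ici 1)) (hl : 1 < l) (hx : 1 < x)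
    (h : ∀ t ∈ Ioc x (x ^ l), s x - ε ≤ s t) :
    s x - ε ≤ logAverage s x (x ^ l) := by
  have hxl : x < x ^ l := by simpa using rpow_lt_rpow_of_exponent_lt hx hl
  exact le_logAverage_of_le (zero_lt_one.trans hx) hxl
    (hs.intervalIntegrable_div_id (zero_lt_one.trans hx) hxl.le fun t ht => hx.le.trans ht.1)
    fun t ht => h t (Ioo_subset_Ioc_self ht)

theorem logAverage_rpow_inv_le_add (hs : LocallyIntegrableOn s (Ici 1)) (hl : 1 < l) (hx : 1 < x)
    (h : ∀ t, x ^ l⁻¹ ≤ t → ∀ u ∈ Ioc t (t ^ l), s t - ε ≤ s u) :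
    logAverage s (x ^ l⁻¹) x ≤ s x + ε := by
  have hx0 : 0 < x := zero_lt_one.trans hx
  have hxl : x ^ l⁻¹ < x := by
    simpa using rpow_lt_rpow_of_exponent_lt hx (inv_lt_one_of_one_lt₀ hl)
  have h1 : 1 ≤ x ^ l⁻¹ := one_le_rpow hx.le (by positivity)
  refine logAverage_le_of_le (by positivity) hxl
    (hs.intervalIntegrable_div_id (by positivity) hxl.le fun t ht => h1.trans ht.1) fun t ht => ?_
  have hxt : x ≤ t ^ l := calc
    x = (x ^ l⁻¹) ^ l := by rw [← rpow_mul hx0.le, inv_mul_cancel₀ (by positivity), rpow_one]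
    _ ≤ t ^ l := rpow_le_rpow (by positivity) ht.1.le (by positivity)
  linarith [h t ht.1.le x ⟨ht.2, hxt⟩]

theorem tendsto_logAverage_rpow (hs : LocallyIntegrableOn s (Ici 1)) {ℓ m n : ℝ}
    (hn : 0 < n) (hnm : n < m)
    (htau : Tendsto (fun t => (log t)⁻¹ * ∫ u in (1 : ℝ)..t, s u / u) atTop (𝓝 ℓ)) :
    Tendsto (fun x => logAverage s (x ^ n) (x ^ m)) atTop (𝓝 ℓ) := by
  have hm : 0 < m := hn.trans hnm
  have hlim := (((htau.comp (tendsto_rpow_atTop hm)).const_mul m).sub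
    ((htau.comp (tendsto_rpow_atTop hn)).const_mul n)).const_mul (m - n)⁻¹
  rw [show (m - n)⁻¹ * (m * ℓ - n * ℓ) = ℓ by field_simp [(sub_pos.2 hnm).ne']] at hlim
  refine hlim.congr' ?_
  filter_upwards [eventually_gt_atTop 1] with x hx
  have hint : ∀ p : ℝ, 0 < p → IntervalIntegrable (fun u => s u / u) volume 1 (x ^ p) :=
    fun p hp => hs.intervalIntegrable_div_id one_pos (one_le_rpow hx.le hp.le) Icc_subset_Ici_self
  have hlogx : log x ≠ 0 := (log_pos hx).ne'
  simp only [logAverage, Function.comp_def, ← integral_interval_sub_left (hint m hm) (hint n hn),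
    log_rpow (zero_lt_one.trans hx)]
  field_simp

end rpow

theorem stmt15 (s : ℝ → ℝ) (ℓ : ℝ)
    (hs : LocallyIntegrableOn s (Ici (1 : ℝ)))
    (hsd : SlowlyDecreasingL1 s)
    (htau : Tendsto (fun t : ℝ => (Real.log t)⁻¹ * ∫ x in (1 : ℝ)..t, s x / x)
      atTop (nhds ℓ)) :
    Tendsto s atTop (nhds ℓ) := by
  rw [Metric.tendsto_nhds]
  intro ε hε
  obtain ⟨l, hl, hsl⟩ := hsd.exists_eventually_sub_le (half_pos hε)
  have hlinv : 0 < l⁻¹ := inv_pos.2 (zero_lt_one.trans hl)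
  have hright := tendsto_logAverage_rpow hs one_pos hl htau
  have hleft := tendsto_logAverage_rpow hs hlinv (inv_lt_one_of_one_lt₀ hl) htau
  simp only [rpow_one] at hright hleft
  have hsl_root := (tendsto_rpow_atTop hlinv).eventually (eventually_forall_ge_atTop.2 hsl)
  filter_upwards [eventually_gt_atTop 1, hsl, hsl_root,
    Metric.tendsto_nhds.1 hright _ (half_pos hε), Metric.tendsto_nhds.1 hleft _ (half_pos hε)]
    with x hx hsx hsx_root hxr hxl
  have hup := sub_le_logAverage_rpow hs hl hx hsx
  have hlow := logAverage_rpow_inv_le_add hs hl hx hsx_root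
  rw [Real.dist_eq, abs_sub_lt_iff] at hxr hxl ⊢
  constructor <;> linarith
end
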